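/- arXiv:2311.13423 — 2 statements merged into one kernel-verified Lean document; each statement's English description precedes it below -/
import Mathlib

section
/- Let N ≥ 2, let 1 ≤ r < N, and let α_j > 1 for j = r+1, …, N. Let Z ⊆ ℝ^{N−1} be a bounded set of parameters z = (z₂,…,z_N), and let g_j : (0,1] × Z → ℝ (j = 2,…,N) be bounded functions such that sup_{z ∈ Z} |g_j(t,z)| → 0 as t → 0⁺ for each j. For z ∈ Z define γ_z(t) := (t, t z₂(1+g₂(t,z)), …, t z_r(1+g_r(t,z)), t^{α_{r+1}} z_{r+1}(1+g_{r+1}(t,z)), …, t^{α_N} z_N(1+g_N(t,z))), and set Y := {γ_z(t) : z ∈ Z, t ∈ (0,1]} ⊆ ℝ^N. Then the tangent cone of Y at the origin satisfies tangentConeAt ℝ Y 0 ⊆ Span(e₁, …, e_r), the linear span of the first r standard basis vectors. -/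
/-!
On `Y`, each coordinate `x_i` with `i ≥ r` is bounded by `B * |x_1| ^ α_i`, because `Z` and the
`g_i` are bounded. If `c_n • d_n → y` with `d_n → 0` and `d_n ∈ Y`, then
`|c_n x_i(d_n)| ≤ B * |c_n x_1(d_n)| * |x_1(d_n)| ^ (α_i - 1) → B * |y_1| * 0`, since `α_i > 1`;
hence `y_i = 0` for every `i ≥ r`.
-/

open Filter Topology

theorem apply_eq_zero_of_mem_tangentConeAt_of_abs_le_rpow {E : Type*} [NormedAddCommGroup E]
    [NormedSpace ℝ E] {s : Set E} {x y : E} (f ℓ : E →L[ℝ] ℝ) {B α : ℝ} (hα : 1 < α)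
    (hs : ∀ x' ∈ s, |f (x' - x)| ≤ B * |ℓ (x' - x)| ^ α) (hy : y ∈ tangentConeAt ℝ s x) :
    f y = 0 := by
  obtain ⟨c, d, hd, hds, hcd⟩ := mem_tangentConeAt_iff_exists_seq.mp hy
  have hℓd : Tendsto (fun n ↦ |ℓ (d n)| ^ (α - 1)) atTop (𝓝 0) := by
    have := ((ℓ.continuous.tendsto 0).comp hd).abs.rpow_const (p := α - 1) (Or.inr (by linarith))
    simpa [Function.comp_def, Real.zero_rpow (by linarith : α - 1 ≠ 0)] using this
  have hbound : Tendsto (fun n ↦ B * |ℓ (c n • d n)| * |ℓ (d n)| ^ (α - 1)) atTop (𝓝 0) := by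
    simpa using ((((ℓ.continuous.tendsto y).comp hcd).abs.const_mul B).mul hℓd)
  have hle : ∀ᶠ n in atTop, |f (c n • d n)| ≤ B * |ℓ (c n • d n)| * |ℓ (d n)| ^ (α - 1) := by
    filter_upwards [hds] with n hn
    have hsplit : |ℓ (d n)| ^ α = |ℓ (d n)| * |ℓ (d n)| ^ (α - 1) := by
      rw [← Real.rpow_one_add' (abs_nonneg _) (by linarith), add_sub_cancel]
    simpa [abs_mul, hsplit, mul_left_comm, mul_assoc] using
      mul_le_mul_of_nonneg_left (hs _ hn) (abs_nonneg (c n))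
  have hfy : Tendsto (fun n ↦ f (c n • d n)) atTop (𝓝 0) :=
    squeeze_zero_norm' hle hbound
  exact tendsto_nhds_unique ((f.continuous.tendsto y).comp hcd) hfy

theorem EuclideanSpace.mem_span_single_of_apply_eq_zero {ι : Type*} [Fintype ι] [DecidableEq ι]
    {p : ι → Prop} {v : EuclideanSpace ℝ ι} (hv : ∀ i, ¬ p i → v i = 0) :
    v ∈ Submodule.span ℝ {u | ∃ j, p j ∧ u = EuclideanSpace.single j 1} := by
  rw [← (EuclideanSpace.basisFun ι ℝ).sum_repr v]
  refine Submodule.sum_mem _ fun j _ ↦ ?_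
  by_cases hj : p j
  · exact Submodule.smul_mem _ _ (Submodule.subset_span ⟨j, hj, by simp⟩)
  · simp [hv j hj]

theorem stmt7_general (N r : ℕ) (hr : 1 ≤ r)
    (α : Fin N → ℝ) (hα : ∀ i : Fin N, r ≤ i.val → 1 < α i)
    (Z : Set (EuclideanSpace ℝ (Fin N))) (hZ : Bornology.IsBounded Z)
    (g : Fin N → ℝ → EuclideanSpace ℝ (Fin N) → ℝ)
    (hgbdd : ∃ C : ℝ, ∀ i : Fin N, 1 ≤ i.val → ∀ t ∈ Set.Ioc (0 : ℝ) 1, ∀ z ∈ Z,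
      |g i t z| ≤ C) :
    tangentConeAt ℝ
      {x : EuclideanSpace ℝ (Fin N) | ∃ z ∈ Z, ∃ t ∈ Set.Ioc (0 : ℝ) 1,
        ∀ i : Fin N, x i =
          if i.val = 0 then t
          else if i.val < r then t * z i * (1 + g i t z)
          else t ^ (α i) * z i * (1 + g i t z)} 0 ⊆
    ↑(Submodule.span ℝ {v : EuclideanSpace ℝ (Fin N) |
        ∃ j : Fin N, j.val < r ∧ v = EuclideanSpace.single j 1}) := by
  intro y hy
  refine EuclideanSpace.mem_span_single_of_apply_eq_zero fun i hi ↦ ?_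
  replace hi : r ≤ i.val := not_lt.mp hi
  obtain ⟨C, hC⟩ := hgbdd
  obtain ⟨M, hM⟩ := isBounded_iff_forall_norm_le.mp hZ
  refine apply_eq_zero_of_mem_tangentConeAt_of_abs_le_rpow (EuclideanSpace.proj i)
    (EuclideanSpace.proj ⟨0, by omega⟩) (B := M * (1 + C)) (hα i hi) ?_ hy
  rintro x ⟨z, hz, t, ht, hx⟩
  have hzi : |z i| ≤ M := (PiLp.norm_apply_le z i).trans (hM z hz)
  have hgi : |1 + g i t z| ≤ 1 + C :=
    (abs_add_le _ _).trans (by simpa using hC i (by omega) t ht z hz)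
  have hxi : x i = t ^ α i * z i * (1 + g i t z) := by
    simpa [show i.val ≠ 0 by omega, show ¬ i.val < r by omega] using hx i
  have hx0 : x ⟨0, by omega⟩ = t := by simpa using hx ⟨0, by omega⟩
  simp only [sub_zero, EuclideanSpace.coe_proj, hxi, hx0, abs_mul, abs_of_pos ht.1,
    abs_of_pos (Real.rpow_pos_of_pos ht.1 _)]
  have hbound : |z i| * |1 + g i t z| ≤ M * (1 + C) :=
    mul_le_mul hzi hgi (abs_nonneg _) ((abs_nonneg _).trans hzi)
  rw [mul_assoc, mul_comm]
  exact mul_le_mul_of_nonneg_right hbound (Real.rpow_nonneg ht.1.le _)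

/-- Coordinates of `ℝ^N` indexed by `Fin N` (so the paper's
`x₁,…,x_N` correspond to indices `0,…,N-1`; the parameters `z₂,…,z_N` are the
coordinates `z i`, `i ≥ 1`, of `z`). With `1 ≤ r < N`, exponents `α i > 1` for
`i ≥ r`, a bounded parameter set `Z`, and bounded perturbations `g i (t, z)`
tending to `0` as `t → 0⁺` uniformly in `z ∈ Z`, the set `Y` swept out by the
deformed weighted-homogeneous arcs
`γ_z(t) = (t, t z_i (1+g_i(t,z)) for 0 < i < r, t^{α_i} z_i (1+g_i(t,z)) for i ≥ r)`,
`z ∈ Z`, `t ∈ (0,1]`, has tangent cone at the origin contained in the span of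
the first `r` standard basis vectors. -/
theorem stmt7 (N r : ℕ) (hN : 2 ≤ N) (hr : 1 ≤ r) (hrN : r < N)
    (α : Fin N → ℝ) (hα : ∀ i : Fin N, r ≤ i.val → 1 < α i)
    (Z : Set (EuclideanSpace ℝ (Fin N))) (hZ : Bornology.IsBounded Z)
    (g : Fin N → ℝ → EuclideanSpace ℝ (Fin N) → ℝ)
    (hgbdd : ∃ C : ℝ, ∀ i : Fin N, 1 ≤ i.val → ∀ t ∈ Set.Ioc (0 : ℝ) 1, ∀ z ∈ Z,
      |g i t z| ≤ C)
    (hg : ∀ i : Fin N, 1 ≤ i.val → ∀ ε > (0 : ℝ), ∃ δ > (0 : ℝ),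
      ∀ t ∈ Set.Ioc (0 : ℝ) 1, t < δ → ∀ z ∈ Z, |g i t z| < ε) :
    tangentConeAt ℝ
      {x : EuclideanSpace ℝ (Fin N) | ∃ z ∈ Z, ∃ t ∈ Set.Ioc (0 : ℝ) 1,
        ∀ i : Fin N, x i =
          if i.val = 0 then t
          else if i.val < r then t * z i * (1 + g i t z)
          else t ^ (α i) * z i * (1 + g i t z)} 0 ⊆
    ↑(Submodule.span ℝ {v : EuclideanSpace ℝ (Fin N) |
        ∃ j : Fin N, j.val < r ∧ v = EuclideanSpace.single j 1}) :=
  stmt7_general N r hr α hα Z hZ g hgbdd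
end

section
/- Let k ≥ 2 be an integer and let Y := {(x,y,z) ∈ ℝ³ : x² + y² = z^{2k} and z ≥ 0} be the horn. Then the tangent cone of Y at the origin, in Mathlib's sense, equals the z-axis: tangentConeAt ℝ Y 0 = {(0,0,c) : c ∈ ℝ}. In particular the tangent cone has dimension 1, strictly less than the dimension 2 of Y, i.e. the horn is a thin set. -/
/-!
On the horn `x² + y² = z^{2k}` the horizontal part `(x, y)` of a point `p` has norm at most
`|z|^k ≤ ‖p‖^k`, so the projection `p ↦ (x, y)` has derivative `0` within the horn at the
origin. As it is also its own derivative, the two derivatives agree on the tangent cone, which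
therefore lies in the `z`-axis. Conversely the curve `t ↦ (t^k, 0, t)`, `t ≥ 0`, runs in the
horn with velocity `(0, 0, 1)` at `t = 0`; since the tangent cone of `[0, ∞)` at `0` is all of
`ℝ`, the whole `z`-axis is tangent.
-/

open Set Filter Topology Asymptotics

section TangentCone

variable {𝕜 : Type*} [NontriviallyNormedField 𝕜]
  {E : Type*} [NormedAddCommGroup E] [NormedSpace 𝕜 E]
  {F : Type*} [NormedAddCommGroup F] [NormedSpace 𝕜 F]

theorem tangentConeAt_subset_preimage_zero_of_isBigO {s : Set E} {x : E} {L : E →L[𝕜] F}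
    {n : ℕ} (h : (fun y => L (y - x)) =O[𝓝[s] x] fun y => ‖y - x‖ ^ n) (hx : x ∈ s)
    (hn : 1 < n) :
    tangentConeAt 𝕜 s x ⊆ L ⁻¹' {0} := by
  have hL : HasFDerivWithinAt (fun y => L (y - x)) L s x :=
    (L.hasFDerivAt.comp x ((hasFDerivAt_id x).sub_const x)).hasFDerivWithinAt
  exact fun v hv => hL.unique_on (h.hasFDerivWithinAt hx hn) hv

theorem smul_mem_tangentConeAt_of_hasDerivWithinAt {s : Set E} {γ : 𝕜 → E} {t : Set 𝕜}
    {a : 𝕜} {v : E} (hγ : HasDerivWithinAt γ v t a) (ha : AccPt a (𝓟 t))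
    (hγs : MapsTo γ t s) (c : 𝕜) : c • v ∈ tangentConeAt 𝕜 s (γ a) := by
  have hc : c ∈ tangentConeAt 𝕜 t a := by simp [tangentConeAt_eq_univ ha]
  exact tangentConeAt_mono hγs.image_subset
    (by simpa using hγ.hasFDerivWithinAt.mapsTo_tangent_cone hc)

end TangentCone

def horn (k : ℕ) : Set (ℝ × ℝ × ℝ) :=
  {p | p.1 ^ 2 + p.2.1 ^ 2 = p.2.2 ^ (2 * k) ∧ 0 ≤ p.2.2}

def horizontalProj : ℝ × ℝ × ℝ →L[ℝ] ℝ × ℝ :=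
  (ContinuousLinearMap.fst ℝ ℝ (ℝ × ℝ)).prod
    ((ContinuousLinearMap.fst ℝ ℝ ℝ).comp (ContinuousLinearMap.snd ℝ ℝ (ℝ × ℝ)))

@[simp]
theorem horizontalProj_apply (p : ℝ × ℝ × ℝ) : horizontalProj p = (p.1, p.2.1) := rfl

theorem norm_horizontalProj_le_of_mem_horn {k : ℕ} {p : ℝ × ℝ × ℝ} (hp : p ∈ horn k) :
    ‖horizontalProj p‖ ≤ ‖p‖ ^ k := by
  obtain ⟨hsq, -⟩ := hp
  have hzk : ‖p.2.2‖ ^ k ≤ ‖p‖ ^ k :=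
    pow_le_pow_left₀ (norm_nonneg _) ((norm_snd_le p.2).trans (norm_snd_le p)) k
  have hz : (p.2.2 ^ k) ^ 2 = p.1 ^ 2 + p.2.1 ^ 2 := by rw [hsq, ← pow_mul, mul_comm]
  have hx : ‖p.1‖ ≤ ‖p.2.2‖ ^ k := by
    rw [Real.norm_eq_abs, Real.norm_eq_abs, ← abs_pow]
    exact sq_le_sq.mp (by nlinarith [sq_nonneg p.2.1])
  have hy : ‖p.2.1‖ ≤ ‖p.2.2‖ ^ k := by
    rw [Real.norm_eq_abs, Real.norm_eq_abs, ← abs_pow]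
    exact sq_le_sq.mp (by nlinarith [sq_nonneg p.1])
  exact (max_le hx hy).trans hzk

theorem tangentConeAt_horn_subset {k : ℕ} (hk : 1 < k) :
    tangentConeAt ℝ (horn k) 0 ⊆ range fun c : ℝ => ((0 : ℝ), (0 : ℝ), c) := by
  have hO : (fun p => horizontalProj (p - 0)) =O[𝓝[horn k] 0] fun p => ‖p - 0‖ ^ k := by
    refine IsBigO.of_bound 1 (eventually_mem_nhdsWithin.mono fun p hp => ?_)
    simpa using norm_horizontalProj_le_of_mem_horn hp
  have h0 : (0 : ℝ × ℝ × ℝ) ∈ horn k :=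
    ⟨by simp [zero_pow (by omega : 2 * k ≠ 0)], le_rfl⟩
  intro v hv
  have hker : horizontalProj v = 0 := tangentConeAt_subset_preimage_zero_of_isBigO hO h0 hk hv
  rw [horizontalProj_apply, Prod.mk_eq_zero] at hker
  exact ⟨v.2.2, by ext <;> simp [hker.1, hker.2]⟩

theorem range_subset_tangentConeAt_horn {k : ℕ} (hk : 1 < k) :
    (range fun c : ℝ => ((0 : ℝ), (0 : ℝ), c)) ⊆ tangentConeAt ℝ (horn k) 0 := by
  let γ : ℝ → ℝ × ℝ × ℝ := fun t => (t ^ k, 0, t)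
  have hγ : HasDerivAt γ (0, 0, 1) 0 := by
    have hpow : HasDerivAt (fun t : ℝ => t ^ k) 0 0 := by
      simpa [zero_pow (Nat.sub_ne_zero_of_lt hk)] using hasDerivAt_pow k (0 : ℝ)
    exact hpow.prodMk ((hasDerivAt_const _ _).prodMk (hasDerivAt_id 0))
  have hγ_horn : MapsTo γ (Ici 0) (horn k) := fun t (ht : 0 ≤ t) =>
    ⟨by simp only [γ]; ring, ht⟩
  have hγ0 : γ 0 = 0 := by simp [γ]; omega
  rintro _ ⟨c, rfl⟩
  simpa [hγ0] using smul_mem_tangentConeAt_of_hasDerivWithinAt hγ.hasDerivWithinAt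
    (uniqueDiffWithinAt_Ici 0).accPt hγ_horn c

/-- For an integer `k ≥ 2`, the tangent cone at the origin (in
Mathlib's sense) of the horn `Y = {(x,y,z) ∈ ℝ³ : x² + y² = z^{2k}, z ≥ 0}`
equals the `z`-axis `{(0,0,c) : c ∈ ℝ}`; in particular the tangent cone is
1-dimensional while `Y` is 2-dimensional, i.e. the horn is a thin set. -/
theorem stmt13 (k : ℕ) (hk : 2 ≤ k) :
    tangentConeAt ℝ
      {p : ℝ × ℝ × ℝ | p.1 ^ 2 + p.2.1 ^ 2 = p.2.2 ^ (2 * k) ∧ 0 ≤ p.2.2} 0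
      = Set.range fun c : ℝ => ((0 : ℝ), (0 : ℝ), c) :=
  (tangentConeAt_horn_subset hk).antisymm (range_subset_tangentConeAt_horn hk)
end
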